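/- arXiv:2303.18077 — 2 statements merged into one kernel-verified Lean document; each statement's English description precedes it below -/
import Mathlib

section
/- Let 1 ≤ i ≤ m+1 and let w = D(w₁,…,w_{i−1},w_i,∅,…,∅) be an m-Dyck path with w_i ≠ ∅ (the last m+1−i components being empty). Then the first factor in the unique factorisation of w as a product of generators of the free monoid (D_m, *) is D(w₁,…,w_{i−1},1·0^m,∅,…,∅), and w = D(w₁,…,w_{i−1},1·0^m,∅,…,∅) * w_i. -/
/-! Words over `Bool` encode lattice paths: `true` = up step (letter 1),
`false` = down step (letter 0). -/

/-- `w` is an `m`-Dyck word: the number of 0's is `m` times the number of 1's,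
and every prefix `p` satisfies `m·|p|₁ ≥ |p|₀`.  (The empty word is allowed;
an `m`-Dyck path of size `n` is an `m`-Dyck word with `n` letters 1.) -/
def IsDyck (m : ℕ) (w : List Bool) : Prop :=
  w.count false = m * w.count true ∧
  ∀ p : List Bool, p <+: w → p.count false ≤ m * p.count true

/-- Cover relation of the greedy `m`-Tamari order: swap a valley's down step with
the *longest* Dyck factor that follows it. -/
def GreedyCover (m : ℕ) (w w' : List Bool) : Prop :=
  ∃ u d v : List Bool, d ≠ [] ∧ IsDyck m d ∧
    w = u ++ false :: (d ++ v) ∧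
    w' = u ++ d ++ false :: v ∧
    ∀ d' : List Bool, d' <+: d ++ v → IsDyck m d' → d'.length ≤ d.length

/-- The greedy `m`-Tamari order (reflexive-transitive closure of the cover relation). -/
def GreedyLe (m : ℕ) : List Bool → List Bool → Prop :=
  Relation.ReflTransGen (GreedyCover m)

/-- Cover relation of the ordinary `m`-Tamari order: swap a valley's down step with
the *shortest nonempty* Dyck factor that follows it. -/
def OrdCover (m : ℕ) (w w' : List Bool) : Prop :=
  ∃ u d v : List Bool, d ≠ [] ∧ IsDyck m d ∧
    w = u ++ false :: (d ++ v) ∧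
    w' = u ++ d ++ false :: v ∧
    ∀ d' : List Bool, d' <+: d ++ v → IsDyck m d' → d' ≠ [] → d.length ≤ d'.length

/-- The ordinary `m`-Tamari order. -/
def OrdLe (m : ℕ) : List Bool → List Bool → Prop :=
  Relation.ReflTransGen (OrdCover m)

/-- The word `1·0^m` (a single peak), unit of the monoid `(D_m, *)`. -/
def peakWord (m : ℕ) : List Bool := true :: List.replicate m false

/-- Length of the final descent: the longest suffix of the form `0^k`. -/
def finalDescent (w : List Bool) : ℕ := (w.reverse.takeWhile (fun b => !b)).length

/-- The product `w₁ * w₂` on nonempty `m`-Dyck words: replace the rightmost peak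
(the last up step together with the `m` down steps following it) of `w₁` by `w₂`. -/
def star (m : ℕ) (w₁ w₂ : List Bool) : List Bool :=
  w₁.take (w₁.length - (finalDescent w₁ + 1)) ++ w₂ ++
    List.replicate (finalDescent w₁ - m) false

/-- Delete the last peak (the last up step and the `m` down steps following it). -/
def delPeak (m : ℕ) (w : List Bool) : List Bool :=
  w.take (w.length - (finalDescent w + 1)) ++ List.replicate (finalDescent w - m) false

/-- `D(w₀, …, w_m) = 1 (w₀ 0) (w₁ 0) ⋯ (w_{m-1} 0) w_m` : the canonical
decomposition of nonempty `m`-Dyck words (components indexed by `Fin (m+1)`). -/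
def Dpath (m : ℕ) (ws : Fin (m+1) → List Bool) : List Bool :=
  true :: ((List.ofFn fun j : Fin m => ws j.castSucc ++ [false]).flatten ++ ws (Fin.last m))

/-- Generators of the free monoid `(D_m, *)` : the words
`D(w₁,…,w_{i−1}, 1·0^m, ∅,…,∅)` with Dyck (possibly empty) components before
position `i`. -/
def IsGenerator (m : ℕ) (g : List Bool) : Prop :=
  ∃ i : Fin (m+1), ∃ ws : Fin (m+1) → List Bool,
    (∀ j, IsDyck m (ws j)) ∧ ws i = peakWord m ∧
    (∀ j : Fin (m+1), i < j → ws j = []) ∧ g = Dpath m ws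

/-- A prime (no contact) nonempty `m`-Dyck word: no proper nonempty prefix `p`
satisfies `m·|p|₁ = |p|₀`. -/
def IsPrimePath (m : ℕ) (w : List Bool) : Prop :=
  IsDyck m w ∧ w ≠ [] ∧
  ∀ p : List Bool, p <+: w → p ≠ [] → p ≠ w → p.count false ≠ m * p.count true

/-!
If the components of `D(w₁,…,w_{m+1})` after position `i` are empty, the path ends with
`w_i 0^{m+1-i}`. So the generator `g = D(w₁,…,w_{i-1},1·0^m,∅,…,∅)` ends with its last peak
followed by `0^{m+1-i}`, and `g * x` is `g` with its `i`-th component replaced by `x`.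
In a factorisation `w = g * x` the product `x` of the remaining factors is a nonempty Dyck path,
so `w` gets a second decomposition into Dyck components. The decomposition is unique because a
Dyck path followed by a `0` is never a prefix of another Dyck path. Comparing the last nonempty
components then determines both the position of the peak in `g` and the other components of `g`.
-/

open Function

lemma List.prefix_append_cases {α : Type*} {q a b : List α} (h : q <+: a ++ b) :
    q <+: a ∨ ∃ q', q = a ++ q' ∧ q' <+: b := by
  obtain ⟨r, hr⟩ := h
  rcases List.append_eq_append_iff.1 hr with ⟨c, rfl, -⟩ | ⟨c, rfl, hc⟩
  · exact Or.inl (List.prefix_append _ _)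
  · exact Or.inr ⟨c, rfl, r, hc.symm⟩

lemma eq_of_update_eq_of_forall_gt {ι α : Type*} [LinearOrder ι] {us ws : ι → α} {i i' : ι}
    {a x : α} (hus : ∀ j, i' < j → us j = a) (hws : ∀ j, i < j → ws j = a) (hx : x ≠ a)
    (hwi : ws i ≠ a) (h : update us i' x = ws) : i' = i := by
  subst h
  rcases lt_trichotomy i' i with hlt | rfl | hgt
  · rw [update_of_ne hlt.ne', hus i hlt] at hwi
    exact (hwi rfl).elim
  · rfl
  · exact (hx (by simpa using hws i' hgt)).elim

lemma finalDescent_append_cons_replicate (A : List Bool) (K : ℕ) :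
    finalDescent (A ++ true :: List.replicate K false) = K := by
  simp [finalDescent]

lemma star_append_cons_replicate (m K : ℕ) (A x : List Bool) :
    star m (A ++ true :: List.replicate K false) x = A ++ x ++ List.replicate (K - m) false := by
  simp [_root_.star, finalDescent_append_cons_replicate]

lemma exists_Dpath_update_eq (m : ℕ) (i : Fin (m + 1)) (ws : Fin (m + 1) → List Bool)
    (hempty : ∀ j, i < j → ws j = []) :
    ∃ A : List Bool, ∀ x, Dpath m (update ws i x) = A ++ x ++ List.replicate (m - i) false := by
  obtain ⟨i, hi⟩ := i
  obtain ⟨k, rfl⟩ : ∃ k, m = i + k := ⟨m - i, by omega⟩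
  refine ⟨true :: (List.ofFn fun j : Fin i => ws ⟨j, by omega⟩ ++ [false]).flatten, fun x => ?_⟩
  have hfront : ∀ j : Fin i, update ws ⟨i, hi⟩ x (Fin.castLE (by omega) j).castSucc
      = ws ⟨j, by omega⟩ := fun j => update_of_ne (Fin.ne_of_val_ne j.isLt.ne) _ _
  simp only [Dpath, List.ofFn_add, List.flatten_append, hfront, List.cons_append, List.append_assoc]
  congr 2
  cases k with
  | zero => simp [Fin.last]
  | succ k =>
    have hat : ∀ j : Fin (i + (k + 1) + 1), (j : ℕ) = i → update ws ⟨i, hi⟩ x j = x :=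
      fun j hj => by rw [show j = ⟨i, hi⟩ from Fin.ext hj, update_self]
    have hafter : ∀ j : Fin (i + (k + 1) + 1), i < j → update ws ⟨i, hi⟩ x j = [] :=
      fun j hj => by rw [update_of_ne (Fin.ne_of_val_ne hj.ne'), hempty _ hj]
    simp [List.ofFn_succ, hat, hafter, List.replicate_succ]

lemma star_Dpath_eq_Dpath_update {m : ℕ} {i : Fin (m + 1)} {us : Fin (m + 1) → List Bool}
    (hpeak : us i = peakWord m) (hempty : ∀ j, i < j → us j = []) (x : List Bool) :
    star m (Dpath m us) x = Dpath m (update us i x) := by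
  obtain ⟨A, hA⟩ := exists_Dpath_update_eq m i us hempty
  have hus : Dpath m us = A ++ true :: List.replicate (m + (m - i)) false := by
    rw [← update_eq_self i us, hA, hpeak]
    simp [peakWord, ← List.replicate_append_replicate]
  rw [hus, star_append_cons_replicate, hA, Nat.add_sub_cancel_left]

lemma Dpath_eq_blocks (m : ℕ) (ws : Fin (m + 1) → List Bool) :
    Dpath m ws = true :: (((List.ofFn fun j : Fin m => ws j.castSucc).map (· ++ [false])).flatten
      ++ ws (Fin.last m)) := by
  simp [Dpath, List.map_ofFn, Function.comp_def]

lemma IsDyck.nil (m : ℕ) : IsDyck m [] := ⟨by simp, fun p hp => by simp [List.prefix_nil.1 hp]⟩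

lemma IsDyck.prefix_append_false_cons_le {m k : ℕ} {b r : List Bool} (hb : IsDyck m b)
    (hr : ∀ p, p <+: r → p.count false ≤ m * p.count true + k) :
    ∀ p, p <+: b ++ false :: r → p.count false ≤ m * p.count true + (k + 1) := by
  intro p hp
  rcases List.prefix_append_cases hp with hp | ⟨q, rfl, hq⟩
  · have := hb.2 p hp
    omega
  rcases List.prefix_cons_iff.1 hq with rfl | ⟨q', rfl, hq'⟩
  · simp [hb.1]
  · have := hr q' hq'
    simp only [List.count_append, List.count_cons_self, List.count_cons_of_ne Bool.false_ne_true,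
      hb.1, Nat.mul_add]
    omega

section Blocks

variable {m : ℕ} {bs : List (List Bool)} {t : List Bool}

lemma prefix_blocks_append_le (hbs : ∀ b ∈ bs, IsDyck m b) (ht : IsDyck m t) :
    ∀ p, p <+: (bs.map (· ++ [false])).flatten ++ t →
      p.count false ≤ m * p.count true + bs.length := by
  induction bs with
  | nil => simpa using ht.2
  | cons b bs ih =>
    simpa using (hbs b (by simp)).prefix_append_false_cons_le
      (ih fun c hc => hbs c (List.mem_cons_of_mem b hc))

lemma count_blocks_append (hbs : ∀ b ∈ bs, IsDyck m b) (ht : IsDyck m t) :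
    ((bs.map (· ++ [false])).flatten ++ t).count false
      = m * ((bs.map (· ++ [false])).flatten ++ t).count true + bs.length := by
  induction bs with
  | nil => simpa using ht.1
  | cons b bs ih =>
    have ih := ih fun c hc => hbs c (List.mem_cons_of_mem b hc)
    have hb := (hbs b (by simp)).1
    simp only [List.map_cons, List.flatten_cons, List.append_assoc, List.count_append,
      List.count_cons_self, List.count_cons_of_ne Bool.false_ne_true, List.count_nil,
      List.length_cons] at ih ⊢
    rw [ih, hb]
    ring

end Blocks

theorem isDyck_Dpath {m : ℕ} {ws : Fin (m + 1) → List Bool} (h : ∀ j, IsDyck m (ws j)) :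
    IsDyck m (Dpath m ws) := by
  have hbs : ∀ b ∈ List.ofFn (fun j : Fin m => ws j.castSucc), IsDyck m b := by
    simp [List.mem_ofFn, h]
  rw [Dpath_eq_blocks]
  constructor
  · have := count_blocks_append hbs (h (Fin.last m))
    rw [List.length_ofFn] at this
    rw [List.count_cons_self, List.count_cons_of_ne (by decide), this, Nat.mul_succ]
  · intro p hp
    rcases List.prefix_cons_iff.1 hp with rfl | ⟨q, rfl, hq⟩
    · simp
    · have := prefix_blocks_append_le hbs (h _) q hq
      rw [List.length_ofFn] at this
      rw [List.count_cons_self, List.count_cons_of_ne (by decide), Nat.mul_succ]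
      omega

lemma Dpath_const_nil (m : ℕ) : Dpath m (fun _ => []) = peakWord m := by
  simp [Dpath, peakWord]

lemma IsDyck.not_append_false_prefix {m : ℕ} {u v : List Bool} (hu : IsDyck m u)
    (hv : IsDyck m v) : ¬ u ++ [false] <+: v := fun h => by
  have := hv.2 _ h
  simp [hu.1] at this

lemma IsDyck.eq_of_append_false_cons_eq {m : ℕ} {u v r s : List Bool} (hu : IsDyck m u)
    (hv : IsDyck m v) (h : u ++ false :: r = v ++ false :: s) : u = v ∧ r = s := by
  rcases List.append_eq_append_iff.1 h with ⟨c, rfl, hc⟩ | ⟨c, rfl, hc⟩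
  · rcases c with _ | ⟨x, c⟩
    · simpa using hc
    · obtain ⟨rfl, -⟩ := List.cons.inj hc
      exact (hu.not_append_false_prefix hv ⟨c, by simp⟩).elim
  · rcases c with _ | ⟨x, c⟩
    · simpa using hc.symm
    · obtain ⟨rfl, -⟩ := List.cons.inj hc
      exact (hv.not_append_false_prefix hu ⟨c, by simp⟩).elim

lemma blocks_append_inj {m : ℕ} {bs cs : List (List Bool)} (hlen : bs.length = cs.length)
    (hbs : ∀ b ∈ bs, IsDyck m b) (hcs : ∀ c ∈ cs, IsDyck m c) {t t' : List Bool}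
    (h : (bs.map (· ++ [false])).flatten ++ t = (cs.map (· ++ [false])).flatten ++ t') :
    bs = cs ∧ t = t' := by
  induction bs generalizing cs with
  | nil =>
    obtain rfl := List.length_eq_zero_iff.1 hlen.symm
    simpa using h
  | cons b bs ih =>
    obtain _ | ⟨c, cs⟩ := cs
    · simp at hlen
    simp only [List.map_cons, List.flatten_cons, List.append_assoc, List.singleton_append] at h
    obtain ⟨rfl, hrest⟩ := (hbs b (by simp)).eq_of_append_false_cons_eq (hcs c (by simp)) h
    obtain ⟨rfl, rfl⟩ := ih (by simpa using hlen) (fun d hd => hbs d (List.mem_cons_of_mem b hd))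
      (fun d hd => hcs d (List.mem_cons_of_mem b hd)) hrest
    exact ⟨rfl, rfl⟩

theorem Dpath_inj {m : ℕ} {vs ws : Fin (m + 1) → List Bool} (hv : ∀ j, IsDyck m (vs j))
    (hw : ∀ j, IsDyck m (ws j)) (h : Dpath m vs = Dpath m ws) : vs = ws := by
  rw [Dpath_eq_blocks, Dpath_eq_blocks, List.cons.injEq] at h
  obtain ⟨hfront, hlast⟩ := blocks_append_inj (m := m) (by simp) (by simp [List.mem_ofFn, hv])
    (by simp [List.mem_ofFn, hw]) h.2
  funext j
  exact Fin.lastCases hlast (fun j => congrFun (List.ofFn_inj.1 hfront) j) j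

lemma IsGenerator.isDyck_star {m : ℕ} {g x : List Bool} (hg : IsGenerator m g)
    (hx : IsDyck m x) : IsDyck m (star m g x) := by
  obtain ⟨i, us, hus, hpeak, hempty, rfl⟩ := hg
  rw [star_Dpath_eq_Dpath_update hpeak hempty]
  exact isDyck_Dpath ((forall_update_iff _ fun _ w => IsDyck m w).2 ⟨hx, fun j _ => hus j⟩)

lemma IsGenerator.star_ne_nil {m : ℕ} {g : List Bool} (hg : IsGenerator m g) (x : List Bool) :
    star m g x ≠ [] := by
  obtain ⟨i, us, -, hpeak, hempty, rfl⟩ := hg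
  rw [star_Dpath_eq_Dpath_update hpeak hempty]
  exact List.cons_ne_nil _ _

section Factorisation

variable {m : ℕ} {L : List (List Bool)}

lemma isDyck_foldr_star (hL : ∀ g ∈ L, IsGenerator m g) :
    IsDyck m (L.foldr (star m) (peakWord m)) := by
  induction L with
  | nil => simpa [Dpath_const_nil] using isDyck_Dpath fun _ => IsDyck.nil m
  | cons g L ih =>
    exact (hL g (by simp)).isDyck_star (ih fun h hh => hL h (List.mem_cons_of_mem g hh))

lemma foldr_star_ne_nil (hL : ∀ g ∈ L, IsGenerator m g) :
    L.foldr (star m) (peakWord m) ≠ [] := by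
  obtain _ | ⟨g, L⟩ := L
  · exact List.cons_ne_nil _ _
  · exact (hL g (by simp)).star_ne_nil _

end Factorisation

theorem first_factor_of_factorisation_general (m : ℕ)
    (i : Fin (m + 1)) (ws : Fin (m + 1) → List Bool)
    (hdyck : ∀ j, IsDyck m (ws j)) (hne : ws i ≠ [])
    (hempty : ∀ j : Fin (m + 1), i < j → ws j = []) :
    star m (Dpath m (Function.update ws i (peakWord m))) (ws i) = Dpath m ws ∧
    ∀ L : List (List Bool), (∀ g ∈ L, IsGenerator m g) →
      L.foldr (star m) (peakWord m) = Dpath m ws →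
      L.head? = some (Dpath m (Function.update ws i (peakWord m))) := by
  refine ⟨?_, fun L hL hfold => ?_⟩
  · rw [star_Dpath_eq_Dpath_update (update_self i _ ws)
      (fun j hj => by rw [update_of_ne hj.ne', hempty j hj]), update_idem, update_eq_self]
  obtain _ | ⟨g, L⟩ := L
  · have := Dpath_inj (fun _ => IsDyck.nil m) hdyck ((Dpath_const_nil m).trans hfold)
    exact absurd (congrFun this i).symm hne
  obtain ⟨i', us, hus, hpeak, hus_empty, rfl⟩ := hL g (by simp)
  have hL' : ∀ g ∈ L, IsGenerator m g := fun g hg => hL g (List.mem_cons_of_mem _ hg)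
  rw [List.foldr_cons, star_Dpath_eq_Dpath_update hpeak hus_empty] at hfold
  have hupd := Dpath_inj ((forall_update_iff _ fun _ w => IsDyck m w).2
    ⟨isDyck_foldr_star hL', fun j _ => hus j⟩) hdyck hfold
  obtain rfl := eq_of_update_eq_of_forall_gt hus_empty hempty (foldr_star_ne_nil hL') hne hupd
  rw [List.head?_cons, ← hupd, update_idem, ← hpeak, update_eq_self]

/-- If `w = D(w₁,…,w_{i−1}, w_i, ∅,…,∅)` with `w_i ≠ ∅`, then
`w = D(w₁,…,w_{i−1}, 1·0^m, ∅,…,∅) * w_i`, and `D(w₁,…,w_{i−1}, 1·0^m, ∅,…,∅)`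
is the first factor in the (unique) factorisation of `w` into generators of the
free monoid `(D_m, *)`. -/
theorem first_factor_of_factorisation (m : ℕ) (hm : 1 ≤ m)
    (i : Fin (m + 1)) (ws : Fin (m + 1) → List Bool)
    (hdyck : ∀ j, IsDyck m (ws j)) (hne : ws i ≠ [])
    (hempty : ∀ j : Fin (m + 1), i < j → ws j = []) :
    star m (Dpath m (Function.update ws i (peakWord m))) (ws i) = Dpath m ws ∧
    ∀ L : List (List Bool), (∀ g ∈ L, IsGenerator m g) →
      L.foldr (star m) (peakWord m) = Dpath m ws →
      L.head? = some (Dpath m (Function.update ws i (peakWord m))) :=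
  first_factor_of_factorisation_general m i ws hdyck hne hempty
end

section
/- Let v = v₁ * v₂ be a nonempty m-Dyck path, with v₁ and v₂ nonempty m-Dyck paths. (i) If v ⋖ w is a cover relation of the greedy m-Tamari order, then either w = w₁ * v₂ for some w₁ with v₁ ⋖ w₁, or w = v₁ * w₂ for some w₂ with v₂ ⋖ w₂. (ii) Conversely, every cover relation v₁ ⋖ w₁ gives a cover relation v₁ * v₂ ⋖ w₁ * v₂, and every cover relation v₂ ⋖ w₂ gives a cover relation v₁ * v₂ ⋖ v₁ * w₂. (iii) Consequently, the upper ideal {w : v ≤ w} in the greedy order equals {w₁ * w₂ : v₁ ≤ w₁ and v₂ ≤ w₂}. -/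
/-! Write `v₁ = a · 1 0^m · 0^F`, so that `v₁ * x = a · x · 0^F`, and look at the covers of
`a · D · 0^F` for a nonempty Dyck word `D`. A valley inside `D` gives a cover of `D`, because
the suffix of `D` after the valley has nonpositive height, so the trailing `0^F` cannot lengthen
the greedy Dyck factor. A valley in `a`, followed by `r · D · 0^F`, has as greedy Dyck factor
either `r · D · 0^i` (when `r · 0^i` is Dyck for some `i ≤ F`) or the longest Dyck prefix of
`r`; in both cases the move does not depend on `D`. Taking `D = v₂` and `D = 1 0^m` (which has
no valley) matches the covers of `v₁ * v₂` with those of `v₁` and `v₂`, and (iii) follows along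
chains of covers. -/

def height (m : ℕ) (w : List Bool) : ℤ := m * w.count true - w.count false

lemma List.prefix_append_or {α : Type*} {p x y : List α} (h : p <+: x ++ y) :
    p <+: x ∨ ∃ q, p = x ++ q ∧ q <+: y := by
  rcases le_or_gt p.length x.length with hl | hl
  · exact Or.inl (List.prefix_of_prefix_length_le h (List.prefix_append _ _) hl)
  · obtain ⟨q, rfl⟩ := List.prefix_of_prefix_length_le (List.prefix_append _ _) h hl.le
    exact Or.inr ⟨q, rfl, (List.prefix_append_right_inj x).1 h⟩

section Dyck

variable {m : ℕ}

@[simp] lemma height_nil : height m [] = 0 := by simp [height]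

@[simp] lemma height_append (x y : List Bool) :
    height m (x ++ y) = height m x + height m y := by
  simp only [height, List.count_append]; push_cast; ring

@[simp] lemma height_cons_true (w : List Bool) : height m (true :: w) = m + height m w := by
  simp [height]; ring

@[simp] lemma height_cons_false (w : List Bool) : height m (false :: w) = height m w - 1 := by
  simp [height]; ring

@[simp] lemma height_replicate_false (k : ℕ) : height m (List.replicate k false) = -k := by
  simp [height, List.count_replicate]

lemma isDyck_iff_height {w : List Bool} :
    IsDyck m w ↔ height m w = 0 ∧ ∀ p, p <+: w → 0 ≤ height m p := by
  simp only [IsDyck, height, sub_eq_zero, sub_nonneg]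
  norm_cast
  rw [eq_comm]

lemma IsDyck.height_eq_zero {w : List Bool} (h : IsDyck m w) : height m w = 0 :=
  (isDyck_iff_height.1 h).1

lemma IsDyck.height_nonneg {w p : List Bool} (h : IsDyck m w) (hp : p <+: w) :
    0 ≤ height m p :=
  (isDyck_iff_height.1 h).2 p hp

lemma IsDyck.height_nonpos_of_append {p s : List Bool} (h : IsDyck m (p ++ s)) :
    height m s ≤ 0 := by
  have hp := h.height_nonneg (List.prefix_append p s)
  have h0 := h.height_eq_zero
  rw [height_append] at h0
  omega

lemma IsDyck.exists_eq_true_cons {w : List Bool} (h : IsDyck m w) (hn : w ≠ []) :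
    ∃ t, w = true :: t := by
  obtain ⟨b, t, rfl⟩ := List.exists_cons_of_ne_nil hn
  cases b
  · have := h.height_nonneg (List.prefix_append [false] t)
    simp at this
  · exact ⟨t, rfl⟩

lemma IsDyck.true_mem {w : List Bool} (h : IsDyck m w) (hn : w ≠ []) : true ∈ w := by
  obtain ⟨t, rfl⟩ := h.exists_eq_true_cons hn
  exact List.mem_cons_self

lemma IsDyck.of_append {r q : List Bool} (h : IsDyck m (r ++ q)) (hq : 0 ≤ height m q) :
    IsDyck m r := by
  refine isDyck_iff_height.2 ⟨?_, fun p hp => h.height_nonneg (hp.trans (List.prefix_append r q))⟩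
  have hr := h.height_nonneg (List.prefix_append r q)
  have h0 := h.height_eq_zero
  rw [height_append] at h0
  omega

lemma isDyck_insert_iff {x y z : List Bool} (hx : IsDyck m x) :
    IsDyck m (y ++ x ++ z) ↔ IsDyck m (y ++ z) := by
  simp only [isDyck_iff_height, height_append, hx.height_eq_zero, add_zero]
  refine and_congr_right fun _ => ⟨fun h p hp => ?_, fun h p hp => ?_⟩
  · rcases List.prefix_append_or hp with hp | ⟨q, rfl, hq⟩
    · exact h p (hp.trans (by simp))
    · simpa [hx.height_eq_zero] using h (y ++ x ++ q) (by simpa using hq)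
  · rw [List.append_assoc] at hp
    rcases List.prefix_append_or hp with hp | ⟨q, rfl, hq⟩
    · exact h p (hp.trans (List.prefix_append _ _))
    · rcases List.prefix_append_or hq with hq | ⟨s, rfl, hs⟩
      · have := h y (List.prefix_append _ _)
        have := hx.height_nonneg hq
        simp only [height_append]
        omega
      · simpa [hx.height_eq_zero] using h (y ++ s) (by simpa using hs)

lemma IsDyck.prefix_of_prefix_append_replicate {d s : List Bool} {k : ℕ} (hd : IsDyck m d)
    (hs : height m s ≤ 0) (hp : d <+: s ++ List.replicate k false) : d <+: s := by
  rcases List.prefix_append_or hp with h | ⟨q, rfl, hq⟩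
  · exact h
  · have h0 := hd.height_eq_zero
    rw [height_append, (List.prefix_replicate_iff.1 hq).2, height_replicate_false] at h0
    have : q = [] := List.eq_nil_of_length_eq_zero (by omega)
    simp [this]

lemma isDyck_peakWord : IsDyck m (peakWord m) := by
  refine isDyck_iff_height.2 ⟨by simp [peakWord], fun p hp => ?_⟩
  rcases List.prefix_cons_iff.1 hp with rfl | ⟨t, rfl, ht⟩
  · simp
  · obtain ⟨hl, ht⟩ := List.prefix_replicate_iff.1 ht
    rw [ht]
    simp only [height_cons_true, height_replicate_false]
    omega

lemma peakWord_ne_nil : peakWord m ≠ [] := List.cons_ne_nil _ _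

end Dyck

def IsMaxDyckPrefix (m : ℕ) (d s : List Bool) : Prop :=
  d <+: s ∧ IsDyck m d ∧ ∀ d', d' <+: s → IsDyck m d' → d'.length ≤ d.length

section MaxDyckPrefix

variable {m : ℕ}

lemma IsMaxDyckPrefix.eq {d d' s : List Bool} (h : IsMaxDyckPrefix m d s)
    (h' : IsMaxDyckPrefix m d' s) : d = d' :=
  (List.prefix_of_prefix_length_le h.1 h'.1 (h'.2.2 d h.1 h.2.1)).eq_of_length
    (le_antisymm (h'.2.2 d h.1 h.2.1) (h.2.2 d' h'.1 h'.2.1))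

lemma IsMaxDyckPrefix.mono {d s t : List Bool} (h : IsMaxDyckPrefix m d s) (hd : d <+: t)
    (ht : t <+: s) : IsMaxDyckPrefix m d t :=
  ⟨hd, h.2.1, fun d' hd' hd'D => h.2.2 d' (hd'.trans ht) hd'D⟩

lemma IsMaxDyckPrefix.congr {d s s' : List Bool} (h : IsMaxDyckPrefix m d s)
    (hss' : ∀ p, IsDyck m p → (p <+: s ↔ p <+: s')) : IsMaxDyckPrefix m d s' :=
  ⟨(hss' d h.2.1).1 h.1, h.2.1, fun d' hd' hd'D => h.2.2 d' ((hss' d' hd'D).2 hd') hd'D⟩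

lemma isMaxDyckPrefix_of_isDyck_append_replicate {r x : List Bool} {i F : ℕ}
    (hr : IsDyck m (r ++ List.replicate i false)) (hx : IsDyck m x) (hiF : i ≤ F) :
    IsMaxDyckPrefix m (r ++ x ++ List.replicate i false) (r ++ x ++ List.replicate F false) := by
  have hD : IsDyck m (r ++ x ++ List.replicate i false) := (isDyck_insert_iff hx).2 hr
  have hsplit : r ++ x ++ List.replicate F false
      = r ++ x ++ List.replicate i false ++ List.replicate (F - i) false := by
    rw [List.append_assoc _ (List.replicate i false), ← List.replicate_add, Nat.add_sub_cancel' hiF]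
  rw [hsplit]
  exact ⟨List.prefix_append _ _, hD, fun d hp hd =>
    (hd.prefix_of_prefix_append_replicate hD.height_eq_zero.le hp).length_le⟩

lemma prefix_append_append_replicate_iff {r x p : List Bool} {F : ℕ} (hx : IsDyck m x)
    (hr : ∀ i ≤ F, ¬ IsDyck m (r ++ List.replicate i false)) (hp : IsDyck m p) :
    p <+: r ++ x ++ List.replicate F false ↔ p <+: r := by
  refine ⟨fun h => ?_, fun h => h.trans (by simp)⟩
  rw [List.append_assoc] at h
  rcases List.prefix_append_or h with h | ⟨q, rfl, hq⟩
  · exact h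
  · exfalso
    rcases List.prefix_append_or hq with hq | ⟨s, rfl, hs⟩
    · exact hr 0 (Nat.zero_le F) (by simpa using hp.of_append (hx.height_nonneg hq))
    · obtain ⟨hsF, hs⟩ := List.prefix_replicate_iff.1 hs
      rw [hs, ← List.append_assoc, isDyck_insert_iff hx] at hp
      exact hr _ hsF hp

end MaxDyckPrefix

section GreedyCover

variable {m : ℕ}

lemma GreedyCover.of_isMaxDyckPrefix {u d v : List Bool} (hdn : d ≠ [])
    (h : IsMaxDyckPrefix m d (d ++ v)) :
    GreedyCover m (u ++ false :: (d ++ v)) (u ++ d ++ false :: v) :=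
  ⟨u, d, v, hdn, h.2.1, rfl, rfl, h.2.2⟩

lemma GreedyCover.ne_nil_left {w w' : List Bool} (hc : GreedyCover m w w') : w ≠ [] := by
  obtain ⟨u, d, v, -, -, rfl, -, -⟩ := hc
  simp

lemma GreedyCover.ne_nil_right {w w' : List Bool} (hc : GreedyCover m w w') : w' ≠ [] := by
  obtain ⟨u, d, v, -, -, -, rfl, -⟩ := hc
  simp

lemma GreedyCover.isDyck {w w' : List Bool} (hc : GreedyCover m w w') (hw : IsDyck m w) :
    IsDyck m w' := by
  obtain ⟨u, d, v, -, hd, rfl, rfl, -⟩ := hc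
  have h₁ := isDyck_insert_iff hd (y := u ++ [false]) (z := v)
  have h₂ := isDyck_insert_iff hd (y := u) (z := false :: v)
  simp only [List.append_assoc, List.singleton_append] at h₁ h₂ ⊢
  exact h₂.2 (h₁.1 hw)

lemma GreedyCover.append_left {w w' : List Bool} (hc : GreedyCover m w w') (a : List Bool) :
    GreedyCover m (a ++ w) (a ++ w') := by
  obtain ⟨u, d, v, hdn, hd, rfl, rfl, hmax⟩ := hc
  exact ⟨a ++ u, d, v, hdn, hd, by simp, by simp, hmax⟩

lemma GreedyCover.append_replicate_false {w w' : List Bool} (hc : GreedyCover m w w')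
    (hw : IsDyck m w) (F : ℕ) :
    GreedyCover m (w ++ List.replicate F false) (w' ++ List.replicate F false) := by
  obtain ⟨u, d, v, hdn, hd, rfl, rfl, hmax⟩ := hc
  have hs : height m (d ++ v) ≤ 0 :=
    IsDyck.height_nonpos_of_append (p := u ++ [false]) (by simpa using hw)
  refine ⟨u, d, v ++ List.replicate F false, hdn, hd, by simp, by simp, fun d' hp hd' =>
    hmax d' (hd'.prefix_of_prefix_append_replicate hs (by simpa using hp)) hd'⟩

lemma not_greedyCover_peakWord (w : List Bool) : ¬ GreedyCover m (peakWord m) w := by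
  rintro ⟨u, d, v, hdn, hd, hw, -, -⟩
  obtain ⟨t, rfl⟩ := hd.exists_eq_true_cons hdn
  cases u with
  | nil => simp [peakWord] at hw
  | cons b u =>
    have : true ∈ List.replicate m false := by
      simp only [peakWord, List.cons_append, List.cons.injEq] at hw
      rw [hw.2]
      simp
    simp at this

end GreedyCover

section Substitution

variable {m : ℕ}

lemma replicate_false_append_cons {i F : ℕ} (hiF : i ≤ F) :
    List.replicate i false ++ false :: List.replicate (F - i) false
      = List.replicate (F + 1) false := by
  rw [← List.replicate_succ, ← List.replicate_add]
  congr 1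
  omega

lemma exists_greedyCover_of_valley_mem {z s d v : List Bool} {F : ℕ}
    (hD : IsDyck m (z ++ false :: s)) (hdn : d ≠ []) (hd : IsMaxDyckPrefix m d (d ++ v))
    (hdv : d ++ v = s ++ List.replicate F false) :
    ∃ D', GreedyCover m (z ++ false :: s) D' ∧
      z ++ d ++ false :: v = D' ++ List.replicate F false := by
  have hs : height m s ≤ 0 :=
    IsDyck.height_nonpos_of_append (p := z ++ [false]) (by simpa using hD)
  obtain ⟨e, rfl⟩ := hd.2.1.prefix_of_prefix_append_replicate hs (hdv ▸ List.prefix_append d v)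
  obtain rfl : v = e ++ List.replicate F false :=
    List.append_cancel_left (hdv.trans (List.append_assoc _ _ _))
  refine ⟨z ++ d ++ false :: e,
    GreedyCover.of_isMaxDyckPrefix hdn (hd.mono (List.prefix_append _ _) (by simp)), by simp⟩

lemma exists_greedyCover_subst {u r d v D : List Bool} {F : ℕ} (hD : IsDyck m D)
    (hdn : d ≠ []) (hd : IsMaxDyckPrefix m d (d ++ v))
    (hdv : d ++ v = r ++ D ++ List.replicate F false) :
    ∃ a' F', u ++ d ++ false :: v = a' ++ D ++ List.replicate F' false ∧
      ∀ E, IsDyck m E → E ≠ [] →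
        GreedyCover m (u ++ false :: r ++ E ++ List.replicate F false)
          (a' ++ E ++ List.replicate F' false) := by
  rw [hdv] at hd
  by_cases hclose : ∃ i ≤ F, IsDyck m (r ++ List.replicate i false)
  · obtain ⟨i, hiF, hri⟩ := hclose
    obtain rfl := hd.eq (isMaxDyckPrefix_of_isDyck_append_replicate hri hD hiF)
    obtain rfl : v = List.replicate (F - i) false := by
      refine List.append_cancel_left (hdv.trans ?_)
      rw [List.append_assoc _ (List.replicate i false), ← List.replicate_add,
        Nat.add_sub_cancel' hiF]
    refine ⟨u ++ r, F + 1, by simp [← replicate_false_append_cons hiF], fun E hE hEn => ?_⟩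
    have hmax := isMaxDyckPrefix_of_isDyck_append_replicate hri hE hiF
    rw [← Nat.add_sub_cancel' hiF, List.replicate_add, ← List.append_assoc] at hmax
    have := GreedyCover.of_isMaxDyckPrefix (u := u) (by simp [hEn]) hmax
    simpa [← replicate_false_append_cons hiF, Nat.add_sub_cancel' hiF] using this
  · push Not at hclose
    have hdr : IsMaxDyckPrefix m d r :=
      hd.congr fun p hp => prefix_append_append_replicate_iff hD hclose hp
    obtain ⟨e, rfl⟩ := hdr.1
    obtain rfl : v = e ++ D ++ List.replicate F false :=
      List.append_cancel_left (hdv.trans (by simp))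
    refine ⟨u ++ d ++ false :: e, F, by simp, fun E hE _ => ?_⟩
    have hmax : IsMaxDyckPrefix m d (d ++ (e ++ E ++ List.replicate F false)) :=
      hdr.congr fun p hp => by
        simpa using (prefix_append_append_replicate_iff hE hclose hp).symm
    simpa using GreedyCover.of_isMaxDyckPrefix (u := u) hdn hmax

theorem GreedyCover.append_dyck_append_replicate_cases {a D w : List Bool} {F : ℕ}
    (hD : IsDyck m D) (hDn : D ≠ []) (hc : GreedyCover m (a ++ D ++ List.replicate F false) w) :
    (∃ D', GreedyCover m D D' ∧ w = a ++ D' ++ List.replicate F false) ∨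
    ∃ a' F', w = a' ++ D ++ List.replicate F' false ∧
      ∀ E, IsDyck m E → E ≠ [] →
        GreedyCover m (a ++ E ++ List.replicate F false) (a' ++ E ++ List.replicate F' false) := by
  obtain ⟨u, d, v, hdn, hd, hw, rfl, hmax⟩ := hc
  have hdmax : IsMaxDyckPrefix m d (d ++ v) := ⟨List.prefix_append _ _, hd, hmax⟩
  have htrue : true ∉ List.replicate F false := by simp
  rw [List.append_assoc] at hw
  rcases List.append_eq_append_iff.1 hw with ⟨c, rfl, hc⟩ | ⟨c, rfl, hc⟩
  · left
    rcases List.append_eq_append_iff.1 hc with ⟨c', rfl, hc'⟩ | ⟨c', rfl, hc'⟩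
    · exact absurd (hc' ▸ by simp [hd.true_mem hdn]) htrue
    · rcases c' with _ | ⟨b, s⟩
      · rw [List.nil_append] at hc'
        exact absurd (hc' ▸ by simp [hd.true_mem hdn]) htrue
      · obtain ⟨rfl, hs⟩ := List.cons_eq_cons.1 hc'
        obtain ⟨D', hD', hw'⟩ := exists_greedyCover_of_valley_mem hD hdn hdmax hs
        exact ⟨D', hD', by simp [← hw']⟩
  · right
    obtain ⟨t, rfl⟩ := hD.exists_eq_true_cons hDn
    rcases c with _ | ⟨b, r⟩
    · simp at hc
    · obtain ⟨rfl, hr⟩ := List.cons_eq_cons.1 hc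
      simpa using exists_greedyCover_subst (u := u) hD hdn hdmax (by simpa using hr)

end Substitution

section Star

variable {m : ℕ}

lemma exists_eq_append_true_replicate {w : List Bool} (h : true ∈ w) :
    ∃ a k, w = a ++ true :: List.replicate k false := by
  induction w using List.reverseRecOn with
  | nil => simp at h
  | append_singleton ys b ih =>
    cases b
    · obtain ⟨a, k, rfl⟩ := ih (by simpa using h)
      exact ⟨a, k + 1, by simp [List.replicate_succ']⟩
    · exact ⟨ys, 0, rfl⟩

lemma IsDyck.exists_eq_append_peakWord {w : List Bool} (h : IsDyck m w) (hn : w ≠ []) :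
    ∃ a F, w = a ++ peakWord m ++ List.replicate F false := by
  obtain ⟨a, k, rfl⟩ := exists_eq_append_true_replicate (h.true_mem hn)
  have h0 := h.height_eq_zero
  have ha := h.height_nonneg (List.prefix_append a _)
  simp only [height_append, height_cons_true, height_replicate_false] at h0
  refine ⟨a, k - m, ?_⟩
  rw [peakWord, List.append_assoc, List.cons_append, ← List.replicate_add,
    Nat.add_sub_cancel' (by omega)]

lemma star_append_peakWord (a x : List Bool) (F : ℕ) :
    star m (a ++ peakWord m ++ List.replicate F false) x = a ++ x ++ List.replicate F false := by
  have hfd : finalDescent (a ++ peakWord m ++ List.replicate F false) = m + F := by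
    simp [finalDescent, peakWord, List.reverse_replicate]
  rw [_root_.star, hfd]
  simp [peakWord]

theorem greedyCover_star_cases {v₁ v₂ w : List Bool} (h₁ : IsDyck m v₁) (h₁n : v₁ ≠ [])
    (h₂ : IsDyck m v₂) (h₂n : v₂ ≠ []) (hc : GreedyCover m (star m v₁ v₂) w) :
    (∃ w₁, GreedyCover m v₁ w₁ ∧ w = star m w₁ v₂) ∨
    (∃ w₂, GreedyCover m v₂ w₂ ∧ w = star m v₁ w₂) := by
  obtain ⟨a, F, rfl⟩ := h₁.exists_eq_append_peakWord h₁n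
  rw [star_append_peakWord] at hc
  rcases hc.append_dyck_append_replicate_cases h₂ h₂n with ⟨w₂, hc₂, rfl⟩ | ⟨a', F', rfl, hE⟩
  · exact Or.inr ⟨w₂, hc₂, (star_append_peakWord _ _ _).symm⟩
  · exact Or.inl ⟨_, hE _ isDyck_peakWord peakWord_ne_nil, (star_append_peakWord _ _ _).symm⟩

theorem GreedyCover.star_left {v₁ v₂ w₁ : List Bool} (hc : GreedyCover m v₁ w₁)
    (h₁ : IsDyck m v₁) (h₂ : IsDyck m v₂) (h₂n : v₂ ≠ []) :
    GreedyCover m (star m v₁ v₂) (star m w₁ v₂) := by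
  obtain ⟨a, F, rfl⟩ := h₁.exists_eq_append_peakWord hc.ne_nil_left
  rcases hc.append_dyck_append_replicate_cases isDyck_peakWord peakWord_ne_nil with
    ⟨D', hD', -⟩ | ⟨a', F', rfl, hE⟩
  · exact absurd hD' (not_greedyCover_peakWord D')
  · simpa only [star_append_peakWord] using hE v₂ h₂ h₂n

theorem GreedyCover.star_right {v₁ v₂ w₂ : List Bool} (hc : GreedyCover m v₂ w₂)
    (h₁ : IsDyck m v₁) (h₁n : v₁ ≠ []) (h₂ : IsDyck m v₂) :
    GreedyCover m (star m v₁ v₂) (star m v₁ w₂) := by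
  obtain ⟨a, F, rfl⟩ := h₁.exists_eq_append_peakWord h₁n
  rw [star_append_peakWord, star_append_peakWord]
  simpa only [List.append_assoc] using (hc.append_replicate_false h₂ F).append_left a

lemma GreedyLe.isDyck {w w' : List Bool} (h : GreedyLe m w w') (hw : IsDyck m w) :
    IsDyck m w' := by
  induction h with
  | refl => exact hw
  | tail _ hc ih => exact hc.isDyck ih

theorem GreedyLe.star_mono {v₁ v₂ w₁ w₂ : List Bool} (hle₁ : GreedyLe m v₁ w₁)
    (hle₂ : GreedyLe m v₂ w₂) (h₁ : IsDyck m v₁) (h₁n : v₁ ≠ []) (h₂ : IsDyck m v₂)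
    (h₂n : v₂ ≠ []) :
    GreedyLe m (star m v₁ v₂) (star m w₁ w₂) := by
  have hleft : GreedyLe m (star m v₁ v₂) (star m w₁ v₂) := by
    induction hle₁ with
    | refl => exact .refl
    | tail hab hc ih => exact ih.tail (hc.star_left (GreedyLe.isDyck hab h₁) h₂ h₂n)
  have hw₁n : w₁ ≠ [] := by
    cases hle₁ with
    | refl => exact h₁n
    | tail _ hc => exact hc.ne_nil_right
  refine hleft.trans ?_
  induction hle₂ with
  | refl => exact .refl
  | tail hab hc ih => exact ih.tail (hc.star_right (hle₁.isDyck h₁) hw₁n (GreedyLe.isDyck hab h₂))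

theorem GreedyLe.exists_of_star {v₁ v₂ w : List Bool} (h : GreedyLe m (star m v₁ v₂) w)
    (h₁ : IsDyck m v₁) (h₁n : v₁ ≠ []) (h₂ : IsDyck m v₂) (h₂n : v₂ ≠ []) :
    ∃ w₁ w₂, GreedyLe m v₁ w₁ ∧ GreedyLe m v₂ w₂ ∧ w = star m w₁ w₂ := by
  generalize hs : star m v₁ v₂ = s at h
  induction h using Relation.ReflTransGen.head_induction_on generalizing v₁ v₂ with
  | refl => exact ⟨v₁, v₂, .refl, .refl, hs.symm⟩
  | head hc _ ih =>
    subst hs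
    rcases greedyCover_star_cases h₁ h₁n h₂ h₂n hc with ⟨w₁, hc₁, rfl⟩ | ⟨w₂, hc₂, rfl⟩
    · obtain ⟨x₁, x₂, hx₁, hx₂, rfl⟩ := ih (hc₁.isDyck h₁) hc₁.ne_nil_right h₂ h₂n rfl
      exact ⟨x₁, x₂, .head hc₁ hx₁, hx₂, rfl⟩
    · obtain ⟨x₁, x₂, hx₁, hx₂, rfl⟩ := ih h₁ h₁n (hc₂.isDyck h₂) hc₂.ne_nil_right rfl
      exact ⟨x₁, x₂, hx₁, .head hc₂ hx₂, rfl⟩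

end Star

theorem greedy_cover_star_general (m : ℕ) (v₁ v₂ : List Bool)
    (h₁ : IsDyck m v₁) (h₁n : v₁ ≠ []) (h₂ : IsDyck m v₂) (h₂n : v₂ ≠ []) :
    -- (i)
    (∀ w : List Bool, GreedyCover m (star m v₁ v₂) w →
        (∃ w₁, GreedyCover m v₁ w₁ ∧ w = star m w₁ v₂) ∨
        (∃ w₂, GreedyCover m v₂ w₂ ∧ w = star m v₁ w₂)) ∧
    -- (ii)
    (∀ w₁ : List Bool, GreedyCover m v₁ w₁ →
        GreedyCover m (star m v₁ v₂) (star m w₁ v₂)) ∧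
    (∀ w₂ : List Bool, GreedyCover m v₂ w₂ →
        GreedyCover m (star m v₁ v₂) (star m v₁ w₂)) ∧
    -- (iii)
    (∀ w : List Bool, GreedyLe m (star m v₁ v₂) w ↔
        ∃ w₁ w₂ : List Bool, GreedyLe m v₁ w₁ ∧ GreedyLe m v₂ w₂ ∧ w = star m w₁ w₂) :=
  ⟨fun _ hc => greedyCover_star_cases h₁ h₁n h₂ h₂n hc,
    fun _ hc => hc.star_left h₁ h₂ h₂n,
    fun _ hc => hc.star_right h₁ h₁n h₂,
    fun _ => ⟨fun h => h.exists_of_star h₁ h₁n h₂ h₂n,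
      fun ⟨_, _, hle₁, hle₂, hw⟩ => hw ▸ hle₁.star_mono hle₂ h₁ h₁n h₂ h₂n⟩⟩

/-- Compatibility of the product `*` with the greedy `m`-Tamari
order: (i) every cover relation from `v₁ * v₂` acts on one of the two factors;
(ii) cover relations on the factors give cover relations on the product;
(iii) the upper ideal of `v₁ * v₂` is the set of products `w₁ * w₂` with
`v₁ ≤ w₁` and `v₂ ≤ w₂`. -/
theorem greedy_cover_star (m : ℕ) (hm : 1 ≤ m) (v₁ v₂ : List Bool)
    (h₁ : IsDyck m v₁) (h₁n : v₁ ≠ []) (h₂ : IsDyck m v₂) (h₂n : v₂ ≠ []) :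
    -- (i)
    (∀ w : List Bool, GreedyCover m (star m v₁ v₂) w →
        (∃ w₁, GreedyCover m v₁ w₁ ∧ w = star m w₁ v₂) ∨
        (∃ w₂, GreedyCover m v₂ w₂ ∧ w = star m v₁ w₂)) ∧
    -- (ii)
    (∀ w₁ : List Bool, GreedyCover m v₁ w₁ →
        GreedyCover m (star m v₁ v₂) (star m w₁ v₂)) ∧
    (∀ w₂ : List Bool, GreedyCover m v₂ w₂ →
        GreedyCover m (star m v₁ v₂) (star m v₁ w₂)) ∧
    -- (iii)
    (∀ w : List Bool, GreedyLe m (star m v₁ v₂) w ↔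
        ∃ w₁ w₂ : List Bool, GreedyLe m v₁ w₁ ∧ GreedyLe m v₂ w₂ ∧ w = star m w₁ w₂) :=
  greedy_cover_star_general m v₁ v₂ h₁ h₁n h₂ h₂n
end
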